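/- arXiv:2512.03021 — 3 statements merged into one kernel-verified Lean document; each statement's English description precedes it below -/
import Mathlib

section
/- Let 𝕂 : ℝ → ℝ be twice continuously differentiable and bounded with ‖𝕂''‖∞ < ∞. Then the FFT/binned kernel density estimator satisfies max_{1≤i≤n} |f̃^FFT(Y_i) − f̃^exact(Y_i)| ≤ (1/4)·‖𝕂''‖∞·Δ²/h³, and moreover sup_{y∈[x₀,x_{M−1}]} |f̃^FFT(y) − f̃^exact(y)| ≤ (1/4)·‖𝕂''‖∞·Δ²/h³, where f̃^FFT is extended off the grid by linear interpolation. -/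
/-!
If `|g''| ≤ B`, then `g + B x² / 2` and `-g + B x² / 2` are convex, so linear interpolation of `g`
between `p` and `q` is off by at most `B t (1 - t) (q - p)² / 2 ≤ B (q - p)² / 8`; for `𝕂_h` one
has `B = ‖𝕂''‖∞ / h³`. Linear binning is linear interpolation in the data variable, and the FFT
estimator interpolates the binned one in the evaluation variable, so `f̃^FFT(y) - f̃^exact(y)` is
the `ω`-average of the errors of interpolating `(y, Y) ↦ 𝕂_h (y - Y)` first in `Y`, then in `y`.
Interpolation averages, so it does not enlarge the first error, and the two errors add up to
`2 · ‖𝕂''‖∞ Δ² / (8 h³)`.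
-/

open Finset

section Interpolation

variable {g : ℝ → ℝ} {B : ℝ}

lemma hasDerivAt_add_half_mul_sq {x : ℝ} (hg : DifferentiableAt ℝ g x) (c : ℝ) :
    HasDerivAt (fun x => g x + c / 2 * x ^ 2) (deriv g x + c * x) x :=
  (hg.hasDerivAt.fun_add ((hasDerivAt_pow 2 x).const_mul (c / 2))).congr_deriv (by norm_num; ring)

lemma convexOn_add_half_mul_sq (hg : ContDiff ℝ 2 g) (hB : ∀ x, -B ≤ deriv (deriv g) x) :
    ConvexOn ℝ Set.univ (fun x => g x + B / 2 * x ^ 2) := by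
  have hg1 : Differentiable ℝ g := hg.differentiable (by norm_num)
  have hg2 : Differentiable ℝ (deriv g) := (hg.iterate_deriv' 1 1).differentiable (by norm_num)
  have hd : deriv (fun x => g x + B / 2 * x ^ 2) = fun x => deriv g x + B * x :=
    funext fun x => (hasDerivAt_add_half_mul_sq (hg1 x) B).deriv
  refine convexOn_univ_of_deriv2_nonneg (hg1.add (by fun_prop)) ?_ fun x => ?_
  · rw [hd]; exact hg2.add (by fun_prop)
  · have : HasDerivAt (fun x => deriv g x + B * x) (deriv (deriv g) x + B) x :=
      ((hg2 x).hasDerivAt.fun_add ((hasDerivAt_id x).const_mul B)).congr_deriv (by simp)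
    rw [Function.iterate_succ_apply, Function.iterate_one, hd, this.deriv]
    linarith [hB x]

lemma interp_sub_le_of_neg_le_deriv2 (hg : ContDiff ℝ 2 g) (hB : ∀ x, -B ≤ deriv (deriv g) x)
    {t : ℝ} (ht0 : 0 ≤ t) (ht1 : t ≤ 1) (p q : ℝ) :
    g ((1 - t) * p + t * q) - ((1 - t) * g p + t * g q)
      ≤ B / 2 * (t * (1 - t)) * (q - p) ^ 2 := by
  have := (convexOn_add_half_mul_sq hg hB).2 (Set.mem_univ p) (Set.mem_univ q)
    (sub_nonneg.2 ht1) ht0 (by ring)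
  simp only [smul_eq_mul] at this
  linear_combination this

end Interpolation

def InterpErrorLE (f : ℝ → ℝ) (L : ℝ) : Prop :=
  ∀ p q t : ℝ, 0 ≤ t → t ≤ 1 →
    |(1 - t) * f p + t * f q - f ((1 - t) * p + t * q)| ≤ L * (q - p) ^ 2

lemma interpErrorLE_of_abs_deriv2_le {g : ℝ → ℝ} {B : ℝ} (hg : ContDiff ℝ 2 g)
    (hB : ∀ x, |deriv (deriv g) x| ≤ B) : InterpErrorLE g (B / 8) := by
  intro p q t ht0 ht1
  have lower := interp_sub_le_of_neg_le_deriv2 hg (fun x => (abs_le.1 (hB x)).1) ht0 ht1 p q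
  have upper := interp_sub_le_of_neg_le_deriv2 hg.neg (g := -g)
    (fun x => by simpa using (abs_le.1 (hB x)).2) ht0 ht1 p q
  simp only [Pi.neg_apply] at upper
  have hB0 : 0 ≤ B := (abs_nonneg _).trans (hB 0)
  have : B / 2 * (t * (1 - t)) * (q - p) ^ 2 ≤ B / 8 * (q - p) ^ 2 :=
    calc _ ≤ B / 2 * (1 / 4) * (q - p) ^ 2 := by gcongr; nlinarith [sq_nonneg (2 * t - 1)]
      _ = _ := by ring
  exact abs_le.2 ⟨by linarith, by linarith⟩

namespace InterpErrorLE

variable {f : ℝ → ℝ} {L : ℝ}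

lemma comp_sub_left (hf : InterpErrorLE f L) (a : ℝ) : InterpErrorLE (fun u => f (a - u)) L := by
  intro p q t ht0 ht1
  have := hf (a - p) (a - q) t ht0 ht1
  rwa [show (1 - t) * (a - p) + t * (a - q) = a - ((1 - t) * p + t * q) by ring,
    show a - q - (a - p) = -(q - p) by ring, neg_sq] at this

lemma comp_sub_right (hf : InterpErrorLE f L) (b : ℝ) : InterpErrorLE (fun u => f (u - b)) L := by
  intro p q t ht0 ht1
  have := hf (p - b) (q - b) t ht0 ht1
  rwa [show (1 - t) * (p - b) + t * (q - b) = (1 - t) * p + t * q - b by ring,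
    show q - b - (p - b) = q - p by ring] at this

lemma rescale (hf : InterpErrorLE f L) {h : ℝ} (hh : 0 < h) :
    InterpErrorLE (fun u => h⁻¹ * f (u / h)) (L / h ^ 3) := by
  intro p q t ht0 ht1
  have := hf (p / h) (q / h) t ht0 ht1
  rw [show (1 - t) * (p / h) + t * (q / h) = ((1 - t) * p + t * q) / h by ring] at this
  calc _ = |h⁻¹ * ((1 - t) * f (p / h) + t * f (q / h) - f (((1 - t) * p + t * q) / h))| := by
        ring_nf
    _ = h⁻¹ * |(1 - t) * f (p / h) + t * f (q / h) - f (((1 - t) * p + t * q) / h)| := by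
        rw [abs_mul, abs_of_pos (inv_pos.2 hh)]
    _ ≤ h⁻¹ * (L * (q / h - p / h) ^ 2) := by gcongr
    _ = L / h ^ 3 * (q - p) ^ 2 := by field_simp

end InterpErrorLE

-- `Nat.floor`: to the left of `x₀` the index is `0` and `binFrac` is negative.
noncomputable def binIndex (x₀ Δ y : ℝ) : ℕ := ⌊(y - x₀) / Δ⌋₊

noncomputable def binFrac (x₀ Δ y : ℝ) : ℝ := (y - x₀) / Δ - binIndex x₀ Δ y

noncomputable def gridInterp (x₀ Δ : ℝ) (F : ℝ → ℝ) (y : ℝ) : ℝ :=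
  (1 - binFrac x₀ Δ y) * F (x₀ + binIndex x₀ Δ y * Δ)
    + binFrac x₀ Δ y * F (x₀ + ↑(binIndex x₀ Δ y + 1) * Δ)

section Grid

variable {x₀ Δ y : ℝ}

lemma binFrac_nonneg (hΔ : 0 < Δ) (hy : x₀ ≤ y) : 0 ≤ binFrac x₀ Δ y :=
  sub_nonneg.2 (Nat.floor_le (div_nonneg (sub_nonneg.2 hy) hΔ.le))

lemma binFrac_lt_one : binFrac x₀ Δ y < 1 :=
  sub_lt_iff_lt_add'.2 (Nat.lt_floor_add_one _)

lemma eq_interp_binIndex (hΔ : Δ ≠ 0) :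
    y = (1 - binFrac x₀ Δ y) * (x₀ + binIndex x₀ Δ y * Δ)
      + binFrac x₀ Δ y * (x₀ + ↑(binIndex x₀ Δ y + 1) * Δ) := by
  unfold binFrac; push_cast; field_simp; ring

lemma binIndex_add_one_lt {M : ℕ} (hΔ : 0 < Δ) (hy₀ : x₀ ≤ y)
    (hy : y < x₀ + ((M : ℝ) - 1) * Δ) : binIndex x₀ Δ y + 1 < M := by
  have hfloor : (binIndex x₀ Δ y : ℝ) ≤ (y - x₀) / Δ :=
    Nat.floor_le (div_nonneg (sub_nonneg.2 hy₀) hΔ.le)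
  have : (y - x₀) / Δ < (M : ℝ) - 1 := by rw [div_lt_iff₀ hΔ]; linarith
  exact_mod_cast (show (binIndex x₀ Δ y : ℝ) + 1 < M by linarith)

lemma gridInterp_sum_mul {ι : Type*} (s : Finset ι) (c : ι → ℝ) (F : ι → ℝ → ℝ) :
    gridInterp x₀ Δ (fun u => ∑ i ∈ s, c i * F i u) y = ∑ i ∈ s, c i * gridInterp x₀ Δ (F i) y := by
  simp only [gridInterp, mul_sum, ← sum_add_distrib]
  exact sum_congr rfl fun i _ => by ring

lemma abs_gridInterp_sub_gridInterp_le {F G : ℝ → ℝ} {ε : ℝ} (hΔ : 0 < Δ) (hy : x₀ ≤ y)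
    (hFG : ∀ u, |F u - G u| ≤ ε) : |gridInterp x₀ Δ F y - gridInterp x₀ Δ G y| ≤ ε := by
  have ht0 := binFrac_nonneg hΔ hy
  have ht1 : 0 ≤ 1 - binFrac x₀ Δ y := sub_nonneg.2 binFrac_lt_one.le
  obtain ⟨hl₁, hl₂⟩ := abs_le.1 (hFG (x₀ + binIndex x₀ Δ y * Δ))
  obtain ⟨hr₁, hr₂⟩ := abs_le.1 (hFG (x₀ + ↑(binIndex x₀ Δ y + 1) * Δ))
  rw [gridInterp, gridInterp, abs_le]
  constructor <;> nlinarith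

lemma abs_gridInterp_sub_le {F : ℝ → ℝ} {L : ℝ} (hF : InterpErrorLE F L) (hΔ : 0 < Δ)
    (hy : x₀ ≤ y) : |gridInterp x₀ Δ F y - F y| ≤ L * Δ ^ 2 := by
  have := hF (x₀ + binIndex x₀ Δ y * Δ) (x₀ + ↑(binIndex x₀ Δ y + 1) * Δ) _
    (binFrac_nonneg hΔ hy) binFrac_lt_one.le
  rwa [← eq_interp_binIndex hΔ.ne',
    show x₀ + ↑(binIndex x₀ Δ y + 1) * Δ - (x₀ + binIndex x₀ Δ y * Δ) = Δ by push_cast; ring] at this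

lemma abs_gridInterp_gridInterp_sub_le {f : ℝ → ℝ} {L Y : ℝ} (hf : InterpErrorLE f L)
    (hΔ : 0 < Δ) (hy : x₀ ≤ y) (hY : x₀ ≤ Y) :
    |gridInterp x₀ Δ (fun y' => gridInterp x₀ Δ (fun Y' => f (y' - Y')) Y) y - f (y - Y)|
      ≤ 2 * L * Δ ^ 2 :=
  calc _ ≤ |gridInterp x₀ Δ (fun y' => gridInterp x₀ Δ (fun Y' => f (y' - Y')) Y) y
          - gridInterp x₀ Δ (fun y' => f (y' - Y)) y|
        + |gridInterp x₀ Δ (fun y' => f (y' - Y)) y - f (y - Y)| := abs_sub_le _ _ _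
    _ ≤ L * Δ ^ 2 + L * Δ ^ 2 := add_le_add
        (abs_gridInterp_sub_gridInterp_le hΔ hy fun y' =>
          abs_gridInterp_sub_le (hf.comp_sub_left y') hΔ hY)
        (abs_gridInterp_sub_le (hf.comp_sub_right Y) hΔ hy)
    _ = 2 * L * Δ ^ 2 := by ring

end Grid

lemma sum_linearBinning_mul {ι : Type*} [Fintype ι] {M : ℕ} (ω α : ι → ℝ) (j : ι → ℕ)
    (hj : ∀ i, j i + 1 < M) (F : ℕ → ℝ) :
    ∑ m ∈ range M, (∑ i, ω i * ((if m = j i then 1 - α i else 0)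
        + (if m = j i + 1 then α i else 0))) * F m
      = ∑ i, ω i * ((1 - α i) * F (j i) + α i * F (j i + 1)) := by
  simp only [sum_mul]
  rw [sum_comm]
  refine sum_congr rfl fun i _ => ?_
  simp only [mul_add, add_mul, ite_mul, mul_ite, zero_mul, mul_zero, sum_add_distrib,
    sum_ite_eq', mem_range, hj i, (Nat.lt_succ_self _).trans (hj i), if_true]
  ring

lemma abs_sum_mul_le_of_abs_le {ι : Type*} {s : Finset ι} {ω e : ι → ℝ} {B : ℝ}
    (hω : ∀ i ∈ s, 0 ≤ ω i) (hωsum : ∑ i ∈ s, ω i = 1) (he : ∀ i ∈ s, |e i| ≤ B) :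
    |∑ i ∈ s, ω i * e i| ≤ B :=
  calc _ ≤ ∑ i ∈ s, ω i * B := (abs_sum_le_sum_abs _ _).trans <| sum_le_sum fun i hi => by
          rw [abs_mul, abs_of_nonneg (hω i hi)]; exact mul_le_mul_of_nonneg_left (he i hi) (hω i hi)
    _ = B := by rw [← sum_mul, hωsum, one_mul]

theorem stmt_0_general
    (n : ℕ) (Y : Fin n → ℝ) (ω : Fin n → ℝ)
    (hω : ∀ i, 0 ≤ ω i) (hωsum : ∑ i, ω i = 1)
    (h : ℝ) (hh : 0 < h)
    (K : ℝ → ℝ) (hK : ContDiff ℝ 2 K)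
    (C2 : ℝ) (hC2 : ∀ u, |deriv (deriv K) u| ≤ C2)
    (M : ℕ)
    (x0 Δ : ℝ) (hΔ : 0 < Δ)
    (hY : ∀ i, Y i ∈ Set.Ico x0 (x0 + ((M : ℝ) - 1) * Δ))
    (Kh : ℝ → ℝ) (hKh : ∀ u, Kh u = h⁻¹ * K (u / h))
    (fexact : ℝ → ℝ) (hfex : ∀ y, fexact y = ∑ i, ω i * Kh (y - Y i))
    (grid : ℕ → ℝ) (hgrid : ∀ m, grid m = x0 + m * Δ)
    (c : ℕ → ℝ)
    (hc : ∀ m, c m = ∑ i, ω i *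
      ((if m = ⌊(Y i - x0) / Δ⌋₊ then 1 - ((Y i - x0) / Δ - ⌊(Y i - x0) / Δ⌋₊) else 0)
        + (if m = ⌊(Y i - x0) / Δ⌋₊ + 1 then (Y i - x0) / Δ - ⌊(Y i - x0) / Δ⌋₊ else 0)))
    (fbin : ℝ → ℝ) (hfbin : ∀ y, fbin y = ∑ m ∈ range M, c m * Kh (y - grid m))
    (fFFT : ℝ → ℝ)
    (hfFFT : ∀ y, fFFT y =
      (1 - ((y - x0) / Δ - ⌊(y - x0) / Δ⌋₊)) * fbin (grid ⌊(y - x0) / Δ⌋₊)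
        + ((y - x0) / Δ - ⌊(y - x0) / Δ⌋₊) * fbin (grid (⌊(y - x0) / Δ⌋₊ + 1))) :
    (∀ i, |fFFT (Y i) - fexact (Y i)| ≤ 1 / 4 * C2 * Δ ^ 2 / h ^ 3) ∧
    (∀ y ∈ Set.Icc x0 (x0 + ((M : ℝ) - 1) * Δ),
      |fFFT y - fexact y| ≤ 1 / 4 * C2 * Δ ^ 2 / h ^ 3) := by
  obtain rfl : grid = fun m : ℕ => x0 + m * Δ := funext hgrid
  have hKh_err : InterpErrorLE Kh (C2 / 8 / h ^ 3) := by
    rw [show Kh = fun u => h⁻¹ * K (u / h) from funext hKh]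
    exact (interpErrorLE_of_abs_deriv2_le hK hC2).rescale hh
  have hfbin_interp : fbin = fun x => ∑ i, ω i * gridInterp x0 Δ (fun Y' => Kh (x - Y')) (Y i) := by
    funext x
    rw [hfbin]; simp only [hc]
    exact sum_linearBinning_mul ω _ _ (fun i => binIndex_add_one_lt hΔ (hY i).1 (hY i).2) _
  have herr : ∀ y, x0 ≤ y → |fFFT y - fexact y| ≤ 1 / 4 * C2 * Δ ^ 2 / h ^ 3 := by
    intro y hy
    rw [show fFFT y = gridInterp x0 Δ fbin y from hfFFT y, hfbin_interp, gridInterp_sum_mul, hfex,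
      ← sum_sub_distrib]
    simp_rw [← mul_sub]
    refine abs_sum_mul_le_of_abs_le (fun i _ => hω i) hωsum fun i _ => ?_
    calc _ ≤ 2 * (C2 / 8 / h ^ 3) * Δ ^ 2 :=
          abs_gridInterp_gridInterp_sub_le hKh_err hΔ hy (hY i).1
      _ = 1 / 4 * C2 * Δ ^ 2 / h ^ 3 := by ring
  exact ⟨fun i => herr _ (hY i).1, fun y hy => herr y hy.1⟩

/-- Lemma 1 of the paper: the FFT/binned kernel density estimator (linear binning on a
uniform grid, grid convolution, and linear interpolation off the grid) differs from the
exact weighted KDE by at most `(1/4)·‖𝕂''‖∞·Δ²/h³`, both at the data points and uniformly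
on the grid interval. -/
theorem stmt_0
    (n : ℕ) (Y : Fin n → ℝ) (ω : Fin n → ℝ)
    (hω : ∀ i, 0 ≤ ω i) (hωsum : ∑ i, ω i = 1)
    (h : ℝ) (hh : 0 < h)
    (K : ℝ → ℝ) (hK : ContDiff ℝ 2 K)
    (Kbd : ℝ) (hKbd : ∀ u, |K u| ≤ Kbd)
    (C2 : ℝ) (hC2 : ∀ u, |deriv (deriv K) u| ≤ C2)
    (M : ℕ) (hM : 2 ≤ M)
    (x0 Δ : ℝ) (hΔ : 0 < Δ)
    (hY : ∀ i, Y i ∈ Set.Ico x0 (x0 + ((M : ℝ) - 1) * Δ))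
    (Kh : ℝ → ℝ) (hKh : ∀ u, Kh u = h⁻¹ * K (u / h))
    (fexact : ℝ → ℝ) (hfex : ∀ y, fexact y = ∑ i, ω i * Kh (y - Y i))
    (grid : ℕ → ℝ) (hgrid : ∀ m, grid m = x0 + m * Δ)
    (c : ℕ → ℝ)
    (hc : ∀ m, c m = ∑ i, ω i *
      ((if m = ⌊(Y i - x0) / Δ⌋₊ then 1 - ((Y i - x0) / Δ - ⌊(Y i - x0) / Δ⌋₊) else 0)
        + (if m = ⌊(Y i - x0) / Δ⌋₊ + 1 then (Y i - x0) / Δ - ⌊(Y i - x0) / Δ⌋₊ else 0)))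
    (fbin : ℝ → ℝ) (hfbin : ∀ y, fbin y = ∑ m ∈ range M, c m * Kh (y - grid m))
    (fFFT : ℝ → ℝ)
    (hfFFT : ∀ y, fFFT y =
      (1 - ((y - x0) / Δ - ⌊(y - x0) / Δ⌋₊)) * fbin (grid ⌊(y - x0) / Δ⌋₊)
        + ((y - x0) / Δ - ⌊(y - x0) / Δ⌋₊) * fbin (grid (⌊(y - x0) / Δ⌋₊ + 1))) :
    (∀ i, |fFFT (Y i) - fexact (Y i)| ≤ 1 / 4 * C2 * Δ ^ 2 / h ^ 3) ∧
    (∀ y ∈ Set.Icc x0 (x0 + ((M : ℝ) - 1) * Δ),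
      |fFFT y - fexact y| ≤ 1 / 4 * C2 * Δ ^ 2 / h ^ 3) :=
  stmt_0_general n Y ω hω hωsum h hh K hK C2 hC2 M x0 Δ hΔ hY Kh hKh fexact hfex grid hgrid c hc
    fbin hfbin fFFT hfFFT
end

section
/- Let 𝕂 : ℝ → ℝ be twice continuously differentiable and bounded with ‖𝕂''‖∞ < ∞. Then the binned KDE obtained by linear binning satisfies the uniform bound sup_{y∈ℝ} |f̃^bin(y) − f̃^exact(y)| ≤ (1/8)·‖𝕂''‖∞·Δ²/h³. -/
/-!
Linear binning replaces the kernel bump centred at a data point `Y = x_j + α Δ` by the linear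
interpolation `(1 - α) 𝕂_h(y - x_j) + α 𝕂_h(y - x_{j+1})` of the bumps at the two neighbouring
grid nodes. For a `C²` function the interpolation error is at most `‖f''‖∞ α (1 - α) Δ² / 2 ≤
‖f''‖∞ Δ² / 8`; rescaling to `𝕂_h` costs a factor `h⁻³`, and averaging over the data with weights
summing to one preserves the bound.
-/

open Finset

open Set in
theorem abs_sub_sub_deriv_mul_le {f : ℝ → ℝ} (hf : ContDiff ℝ 2 f) {B : ℝ}
    (hB : ∀ u, |deriv (deriv f) u| ≤ B) (a t : ℝ) :
    |f (a + t) - f a - deriv f a * t| ≤ B / 2 * t ^ 2 := by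
  rcases eq_or_ne t 0 with rfl | ht
  · simp
  have hne : a ≠ a + t := by simpa using ht
  obtain ⟨ξ, -, hξ⟩ := taylor_mean_remainder_lagrange_iteratedDeriv (n := 1) hne hf.contDiffOn
  have hderiv : derivWithin f (uIcc a (a + t)) a = deriv f a :=
    (hf.differentiable two_ne_zero a).derivWithin (uniqueDiffOn_uIcc hne a left_mem_uIcc)
  norm_num [iteratedDeriv_succ, hderiv] at hξ
  calc |f (a + t) - f a - deriv f a * t| = |deriv (deriv f) ξ| / 2 * t ^ 2 := by
        rw [show f (a + t) - f a - deriv f a * t = deriv (deriv f) ξ / 2 * t ^ 2 by linarith,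
          abs_mul, abs_div, abs_two, abs_sq]
    _ ≤ B / 2 * t ^ 2 := by gcongr; exact hB ξ

/-- Taylor-expand both endpoint values around `a + β δ`: the first-order terms cancel. -/
theorem abs_linear_interpolation_sub_le {f : ℝ → ℝ} (hf : ContDiff ℝ 2 f) {B : ℝ}
    (hB : ∀ u, |deriv (deriv f) u| ≤ B) (a δ : ℝ) {β : ℝ} (hβ₀ : 0 ≤ β) (hβ₁ : β ≤ 1) :
    |(1 - β) * f a + β * f (a + δ) - f (a + β * δ)| ≤ 1 / 8 * B * δ ^ 2 := by
  have hB₀ : 0 ≤ B := (abs_nonneg _).trans (hB 0)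
  have hleft := abs_sub_sub_deriv_mul_le hf hB (a + β * δ) (-(β * δ))
  have hright := abs_sub_sub_deriv_mul_le hf hB (a + β * δ) ((1 - β) * δ)
  rw [show a + β * δ + -(β * δ) = a by ring] at hleft
  rw [show a + β * δ + (1 - β) * δ = a + δ by ring] at hright
  calc |(1 - β) * f a + β * f (a + δ) - f (a + β * δ)|
      = |(1 - β) * (f a - f (a + β * δ) - deriv f (a + β * δ) * -(β * δ))
          + β * (f (a + δ) - f (a + β * δ) - deriv f (a + β * δ) * ((1 - β) * δ))| := by
        ring_nf
    _ ≤ (1 - β) * (B / 2 * (-(β * δ)) ^ 2) + β * (B / 2 * ((1 - β) * δ) ^ 2) := by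
        refine (abs_add_le _ _).trans ?_
        rw [abs_mul, abs_mul, abs_of_nonneg (sub_nonneg.2 hβ₁), abs_of_nonneg hβ₀]
        gcongr
    _ = B / 2 * (β * (1 - β)) * δ ^ 2 := by ring
    _ ≤ B / 2 * (1 / 4) * δ ^ 2 := by gcongr; nlinarith [sq_nonneg (β - 1 / 2)]
    _ = 1 / 8 * B * δ ^ 2 := by ring

theorem abs_linear_interpolation_scaled_kernel_sub_le {K : ℝ → ℝ} (hK : ContDiff ℝ 2 K) {B : ℝ}
    (hB : ∀ u, |deriv (deriv K) u| ≤ B) {h : ℝ} (hh : 0 < h) (y x Δ : ℝ) {α : ℝ}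
    (hα₀ : 0 ≤ α) (hα₁ : α ≤ 1) :
    |(1 - α) * (h⁻¹ * K ((y - x) / h)) + α * (h⁻¹ * K ((y - (x + Δ)) / h))
      - h⁻¹ * K ((y - (x + α * Δ)) / h)| ≤ 1 / 8 * B * Δ ^ 2 / h ^ 3 := by
  have key := abs_linear_interpolation_sub_le hK hB ((y - x) / h) (-Δ / h) hα₀ hα₁
  rw [show (y - x) / h + -Δ / h = (y - (x + Δ)) / h by ring,
    show (y - x) / h + α * (-Δ / h) = (y - (x + α * Δ)) / h by ring] at key
  calc _ = h⁻¹ * |(1 - α) * K ((y - x) / h) + α * K ((y - (x + Δ)) / h)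
          - K ((y - (x + α * Δ)) / h)| := by
        rw [← abs_of_pos (inv_pos.2 hh), ← abs_mul, abs_of_pos (inv_pos.2 hh)]
        ring_nf
    _ ≤ h⁻¹ * (1 / 8 * B * (-Δ / h) ^ 2) := by gcongr
    _ = 1 / 8 * B * Δ ^ 2 / h ^ 3 := by field_simp

theorem sum_range_linearBin_mul (g : ℕ → ℝ) {M j : ℕ} (hj : j + 1 < M) (α : ℝ) :
    ∑ m ∈ range M, ((if m = j then 1 - α else 0) + (if m = j + 1 then α else 0)) * g m
      = (1 - α) * g j + α * g (j + 1) := by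
  simp only [add_mul, ite_mul, zero_mul, sum_add_distrib, sum_ite_eq', mem_range]
  rw [if_pos (by omega), if_pos hj]

theorem sum_range_sum_linearBin_mul {ι : Type*} (s : Finset ι) (ω α : ι → ℝ) {j : ι → ℕ}
    {M : ℕ} (hj : ∀ i ∈ s, j i + 1 < M) (g : ℕ → ℝ) :
    ∑ m ∈ range M, (∑ i ∈ s, ω i *
        ((if m = j i then 1 - α i else 0) + (if m = j i + 1 then α i else 0))) * g m
      = ∑ i ∈ s, ω i * ((1 - α i) * g (j i) + α i * g (j i + 1)) := by
  simp only [sum_mul]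
  rw [sum_comm]
  refine sum_congr rfl fun i hi => ?_
  simp only [mul_assoc, ← mul_sum, sum_range_linearBin_mul g (hj i hi)]

theorem abs_sum_mul_sub_sum_mul_le {ι : Type*} (s : Finset ι) {ω a b : ι → ℝ} {E : ℝ}
    (hω : ∀ i ∈ s, 0 ≤ ω i) (hω₁ : ∑ i ∈ s, ω i = 1) (hab : ∀ i ∈ s, |a i - b i| ≤ E) :
    |∑ i ∈ s, ω i * a i - ∑ i ∈ s, ω i * b i| ≤ E := by
  calc |∑ i ∈ s, ω i * a i - ∑ i ∈ s, ω i * b i|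
      ≤ ∑ i ∈ s, |ω i * a i - ω i * b i| := by
        rw [← sum_sub_distrib]; exact abs_sum_le_sum_abs _ _
    _ = ∑ i ∈ s, ω i * |a i - b i| := by
        refine sum_congr rfl fun i hi => ?_
        rw [← mul_sub, abs_mul, abs_of_nonneg (hω i hi)]
    _ ≤ ∑ i ∈ s, ω i * E := sum_le_sum fun i hi => by gcongr; exacts [hω i hi, hab i hi]
    _ = E := by rw [← sum_mul, hω₁, one_mul]

theorem stmt_1_general
    (n : ℕ) (Y : Fin n → ℝ) (ω : Fin n → ℝ)
    (hω : ∀ i, 0 ≤ ω i) (hωsum : ∑ i, ω i = 1)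
    (h : ℝ) (hh : 0 < h)
    (K : ℝ → ℝ) (hK : ContDiff ℝ 2 K)
    (C2 : ℝ) (hC2 : ∀ u, |deriv (deriv K) u| ≤ C2)
    (M : ℕ)
    (x0 Δ : ℝ) (hΔ : 0 < Δ)
    (hY : ∀ i, Y i ∈ Set.Ico x0 (x0 + ((M : ℝ) - 1) * Δ))
    (Kh : ℝ → ℝ) (hKh : ∀ u, Kh u = h⁻¹ * K (u / h))
    (fexact : ℝ → ℝ) (hfex : ∀ y, fexact y = ∑ i, ω i * Kh (y - Y i))
    (grid : ℕ → ℝ) (hgrid : ∀ m, grid m = x0 + m * Δ)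
    (c : ℕ → ℝ)
    (hc : ∀ m, c m = ∑ i, ω i *
      ((if m = ⌊(Y i - x0) / Δ⌋₊ then 1 - ((Y i - x0) / Δ - ⌊(Y i - x0) / Δ⌋₊) else 0)
        + (if m = ⌊(Y i - x0) / Δ⌋₊ + 1 then (Y i - x0) / Δ - ⌊(Y i - x0) / Δ⌋₊ else 0)))
    (fbin : ℝ → ℝ) (hfbin : ∀ y, fbin y = ∑ m ∈ range M, c m * Kh (y - grid m)) :
    ∀ y : ℝ, |fbin y - fexact y| ≤ 1 / 8 * C2 * Δ ^ 2 / h ^ 3 := by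
  intro y
  obtain ⟨t, ht⟩ : ∃ t : Fin n → ℝ, ∀ i, (Y i - x0) / Δ = t i := ⟨_, fun _ => rfl⟩
  simp only [ht] at hc
  have ht₀ : ∀ i, 0 ≤ t i := fun i => ht i ▸ div_nonneg (sub_nonneg.2 (hY i).1) hΔ.le
  have hfloor : ∀ i, ⌊t i⌋₊ + 1 < M := fun i => by
    have : t i < M - 1 := by rw [← ht, div_lt_iff₀ hΔ]; linarith [(hY i).2]
    exact_mod_cast (by linarith [Nat.floor_le (ht₀ i)] : (⌊t i⌋₊ : ℝ) + 1 < M)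
  simp only [hfbin, hfex, hc]
  rw [sum_range_sum_linearBin_mul _ _ _ (fun i _ => hfloor i)]
  refine abs_sum_mul_sub_sum_mul_le univ (fun i _ => hω i) hωsum fun i _ => ?_
  have hYi : Y i = grid ⌊t i⌋₊ + (t i - ⌊t i⌋₊) * Δ := by
    rw [hgrid, ← ht]; field_simp; ring
  have hnext : grid (⌊t i⌋₊ + 1) = grid ⌊t i⌋₊ + Δ := by rw [hgrid, hgrid]; push_cast; ring
  simp only [hKh, hYi, hnext]
  exact abs_linear_interpolation_scaled_kernel_sub_le hK hC2 hh y _ Δ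
    (sub_nonneg.2 (Nat.floor_le (ht₀ i))) (by linarith [Nat.lt_floor_add_one (t i)])

/-- Linear-binning error bound: the binned KDE differs from the exact weighted KDE by at
most `(1/8)·‖𝕂''‖∞·Δ²/h³`, uniformly over `y ∈ ℝ`. -/
theorem stmt_1
    (n : ℕ) (Y : Fin n → ℝ) (ω : Fin n → ℝ)
    (hω : ∀ i, 0 ≤ ω i) (hωsum : ∑ i, ω i = 1)
    (h : ℝ) (hh : 0 < h)
    (K : ℝ → ℝ) (hK : ContDiff ℝ 2 K)
    (Kbd : ℝ) (hKbd : ∀ u, |K u| ≤ Kbd)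
    (C2 : ℝ) (hC2 : ∀ u, |deriv (deriv K) u| ≤ C2)
    (M : ℕ) (hM : 2 ≤ M)
    (x0 Δ : ℝ) (hΔ : 0 < Δ)
    (hY : ∀ i, Y i ∈ Set.Ico x0 (x0 + ((M : ℝ) - 1) * Δ))
    (Kh : ℝ → ℝ) (hKh : ∀ u, Kh u = h⁻¹ * K (u / h))
    (fexact : ℝ → ℝ) (hfex : ∀ y, fexact y = ∑ i, ω i * Kh (y - Y i))
    (grid : ℕ → ℝ) (hgrid : ∀ m, grid m = x0 + m * Δ)
    (c : ℕ → ℝ)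
    (hc : ∀ m, c m = ∑ i, ω i *
      ((if m = ⌊(Y i - x0) / Δ⌋₊ then 1 - ((Y i - x0) / Δ - ⌊(Y i - x0) / Δ⌋₊) else 0)
        + (if m = ⌊(Y i - x0) / Δ⌋₊ + 1 then (Y i - x0) / Δ - ⌊(Y i - x0) / Δ⌋₊ else 0)))
    (fbin : ℝ → ℝ) (hfbin : ∀ y, fbin y = ∑ m ∈ range M, c m * Kh (y - grid m)) :
    ∀ y : ℝ, |fbin y - fexact y| ≤ 1 / 8 * C2 * Δ ^ 2 / h ^ 3 :=
  stmt_1_general n Y ω hω hωsum h hh K hK C2 hC2 M x0 Δ hΔ hY Kh hKh fexact hfex grid hgrid c hc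
    fbin hfbin
end

section
/- Let f₀, f₁ : ℝ → [0,∞) be measurable Lebesgue probability densities and π₀ ∈ (0,1), π₁ = 1−π₀. Define the joint probability measure μ on Bool × ℝ by μ = π₀·(δ_{true} ⊗ f₀·λ) + π₁·(δ_{false} ⊗ f₁·λ), where λ is Lebesgue measure. Define r(y) = π₀f₀(y)/(π₀f₀(y)+π₁f₁(y)) when π₀f₀(y)+π₁f₁(y) > 0 and r(y)=0 otherwise. Then the conditional expectation under μ of the indicator of {(z,y) : z = true} given the σ-algebra generated by the second coordinate equals (z,y) ↦ r(y), μ-almost everywhere. -/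
/-!
Over a set `snd ⁻¹' t` the mixture integrates `h` to
`π₀ ∫_t f₀ h(true, ·) + π₁ ∫_t f₁ h(false, ·)`. Since `(π₀ f₀ + π₁ f₁) r = π₀ f₀` pointwise,
both `r ∘ snd` and the indicator of `{Z = true}` integrate to `π₀ ∫_t f₀` over every such set,
and this characterizes the conditional expectation given `snd`.
-/

open MeasureTheory ENNReal

/-- `posteriorWeight (π₀ * f₀ y) (π₁ * f₁ y)` is the responsibility `r y` (set to `0` where both
weights vanish). -/
noncomputable def posteriorWeight (a b : ℝ) : ℝ :=
  if 0 < a + b then a / (a + b) else 0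

section PosteriorWeight

variable {a b : ℝ}

lemma posteriorWeight_nonneg (ha : 0 ≤ a) : 0 ≤ posteriorWeight a b := by
  unfold posteriorWeight
  split_ifs with h
  · exact div_nonneg ha h.le
  · exact le_rfl

lemma posteriorWeight_le_one (hb : 0 ≤ b) : posteriorWeight a b ≤ 1 := by
  unfold posteriorWeight
  split_ifs with h
  · exact div_le_one_of_le₀ (by linarith) h.le
  · exact zero_le_one

lemma norm_posteriorWeight_le_one (ha : 0 ≤ a) (hb : 0 ≤ b) : ‖posteriorWeight a b‖ ≤ 1 := by
  rw [Real.norm_of_nonneg (posteriorWeight_nonneg ha)]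
  exact posteriorWeight_le_one hb

lemma add_mul_posteriorWeight (ha : 0 ≤ a) (hb : 0 ≤ b) :
    (a + b) * posteriorWeight a b = a := by
  unfold posteriorWeight
  split_ifs with h
  · exact mul_div_cancel₀ a h.ne'
  · linarith

lemma Measurable.posteriorWeight {α : Type*} [MeasurableSpace α] {F G : α → ℝ}
    (hF : Measurable F) (hG : Measurable G) :
    Measurable fun y => _root_.posteriorWeight (F y) (G y) :=
  Measurable.ite (measurableSet_lt measurable_const (hF.add hG)) (hF.div (hF.add hG))
    measurable_const

end PosteriorWeight

section Mixture

variable {α : Type*} [MeasurableSpace α] {ν : Measure α}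

noncomputable def twoComponentMixture (ν : Measure α) (π₀ π₁ : ℝ) (f₀ f₁ : α → ℝ) :
    Measure (Bool × α) :=
  ENNReal.ofReal π₀ • (Measure.dirac true).prod (ν.withDensity fun y => ENNReal.ofReal (f₀ y))
    + ENNReal.ofReal π₁ • (Measure.dirac false).prod (ν.withDensity fun y => ENNReal.ofReal (f₁ y))

lemma setIntegral_preimage_snd_dirac_prod_withDensity [SFinite ν] {f : α → ℝ}
    (hf : Measurable f) (hf_nonneg : ∀ y, 0 ≤ f y) {β : Type*} [MeasurableSpace β]
    [MeasurableSingletonClass β] (b : β) {t : Set α} (ht : MeasurableSet t) (h : β × α → ℝ) :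
    ∫ x in Prod.snd ⁻¹' t, h x
        ∂(Measure.dirac b).prod (ν.withDensity fun y => ENNReal.ofReal (f y))
      = ∫ y in t, f y * h (b, y) ∂ν := by
  rw [Measure.dirac_prod, (measurableEmbedding_prodMk_left b).setIntegral_map,
    Set.preimage_preimage, Set.preimage_id', setIntegral_withDensity_eq_setIntegral_toReal_smul
      (by fun_prop) (.of_forall fun _ => ofReal_lt_top) _ ht]
  simp_rw [ENNReal.toReal_ofReal (hf_nonneg _), smul_eq_mul]

lemma isFiniteMeasure_twoComponentMixture (π₀ π₁ : ℝ) {f₀ f₁ : α → ℝ} (hf₀ : Integrable f₀ ν)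
    (hf₁ : Integrable f₁ ν) : IsFiniteMeasure (twoComponentMixture ν π₀ π₁ f₀ f₁) := by
  have := isFiniteMeasure_withDensity_ofReal hf₀.2
  have := isFiniteMeasure_withDensity_ofReal hf₁.2
  exact @isFiniteMeasureAdd _ _ _ _ (Measure.smul_finite _ ofReal_ne_top)
    (Measure.smul_finite _ ofReal_ne_top)

variable [SFinite ν] {π₀ π₁ : ℝ} {f₀ f₁ : α → ℝ}

lemma setIntegral_preimage_snd_twoComponentMixture (hπ₀ : 0 ≤ π₀) (hπ₁ : 0 ≤ π₁)
    (hf₀ : Measurable f₀) (hf₁ : Measurable f₁) (hf₀_nonneg : ∀ y, 0 ≤ f₀ y)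
    (hf₁_nonneg : ∀ y, 0 ≤ f₁ y) {t : Set α} (ht : MeasurableSet t) {h : Bool × α → ℝ}
    (hh : Integrable h (twoComponentMixture ν π₀ π₁ f₀ f₁)) :
    ∫ x in Prod.snd ⁻¹' t, h x ∂twoComponentMixture ν π₀ π₁ f₀ f₁
      = π₀ * ∫ y in t, f₀ y * h (true, y) ∂ν + π₁ * ∫ y in t, f₁ y * h (false, y) ∂ν := by
  rw [twoComponentMixture] at hh ⊢
  rw [Measure.restrict_add,
    integral_add_measure (hh.mono_measure (Measure.le_add_right le_rfl)).restrict
      (hh.mono_measure (Measure.le_add_left le_rfl)).restrict,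
    Measure.restrict_smul, Measure.restrict_smul, integral_smul_measure, integral_smul_measure,
    setIntegral_preimage_snd_dirac_prod_withDensity hf₀ hf₀_nonneg true ht,
    setIntegral_preimage_snd_dirac_prod_withDensity hf₁ hf₁_nonneg false ht,
    toReal_ofReal hπ₀, toReal_ofReal hπ₁, smul_eq_mul, smul_eq_mul]

theorem condExp_indicator_fst_twoComponentMixture (hπ₀ : 0 ≤ π₀) (hπ₁ : 0 ≤ π₁)
    (hf₀ : Measurable f₀) (hf₁ : Measurable f₁) (hf₀_nonneg : ∀ y, 0 ≤ f₀ y)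
    (hf₁_nonneg : ∀ y, 0 ≤ f₁ y) (hf₀_int : Integrable f₀ ν) (hf₁_int : Integrable f₁ ν) :
    (twoComponentMixture ν π₀ π₁ f₀ f₁)[Set.indicator {p : Bool × α | p.1 = true}
        (fun _ => (1 : ℝ)) | MeasurableSpace.comap Prod.snd inferInstance]
      =ᵐ[twoComponentMixture ν π₀ π₁ f₀ f₁]
        fun p => posteriorWeight (π₀ * f₀ p.2) (π₁ * f₁ p.2) := by
  have := isFiniteMeasure_twoComponentMixture π₀ π₁ hf₀_int hf₁_int
  set r := fun y => posteriorWeight (π₀ * f₀ y) (π₁ * f₁ y)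
  have hr : Measurable r := (measurable_const.mul hf₀).posteriorWeight (measurable_const.mul hf₁)
  have hr_le : ∀ y, ‖r y‖ ≤ 1 := fun y => norm_posteriorWeight_le_one
    (mul_nonneg hπ₀ (hf₀_nonneg y)) (mul_nonneg hπ₁ (hf₁_nonneg y))
  have hr_int : Integrable (fun p : Bool × α => r p.2) (twoComponentMixture ν π₀ π₁ f₀ f₁) :=
    .of_bound (hr.comp measurable_snd).aestronglyMeasurable 1 (.of_forall fun p => hr_le p.2)
  have hZ : MeasurableSet {p : Bool × α | p.1 = true} :=
    measurable_fst (measurableSet_singleton true)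
  refine (ae_eq_condExp_of_forall_setIntegral_eq measurable_snd.comap_le
    ((integrable_const 1).indicator hZ) (fun _ _ _ => hr_int.integrableOn) ?_
    (hr.comp (comap_measurable Prod.snd)).aestronglyMeasurable).symm
  rintro _ ⟨t, ht, rfl⟩ -
  have hr₀ : Integrable (fun y => f₀ y * r y) (ν.restrict t) :=
    hf₀_int.restrict.mul_bdd hr.aestronglyMeasurable (.of_forall hr_le)
  have hr₁ : Integrable (fun y => f₁ y * r y) (ν.restrict t) :=
    hf₁_int.restrict.mul_bdd hr.aestronglyMeasurable (.of_forall hr_le)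
  rw [setIntegral_preimage_snd_twoComponentMixture hπ₀ hπ₁ hf₀ hf₁ hf₀_nonneg hf₁_nonneg ht hr_int,
    setIntegral_preimage_snd_twoComponentMixture hπ₀ hπ₁ hf₀ hf₁ hf₀_nonneg hf₁_nonneg ht
      ((integrable_const 1).indicator hZ)]
  simp only [Set.indicator_of_mem (show (true, _) ∈ {p : Bool × α | p.1 = true} from rfl),
    Set.indicator_of_notMem (show (false, _) ∉ {p : Bool × α | p.1 = true} from Bool.false_ne_true),
    mul_one, mul_zero, integral_zero, add_zero]
  calc π₀ * ∫ y in t, f₀ y * r y ∂ν + π₁ * ∫ y in t, f₁ y * r y ∂ν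
      = ∫ y in t, (π₀ * f₀ y + π₁ * f₁ y) * r y ∂ν := by
        rw [← integral_const_mul, ← integral_const_mul,
          ← integral_add (hr₀.const_mul π₀) (hr₁.const_mul π₁)]
        simp only [mul_assoc, add_mul]
    _ = ∫ y in t, π₀ * f₀ y ∂ν := by
        congr! 2 with y
        exact add_mul_posteriorWeight (mul_nonneg hπ₀ (hf₀_nonneg y))
          (mul_nonneg hπ₁ (hf₁_nonneg y))
    _ = π₀ * ∫ y in t, f₀ y ∂ν := integral_const_mul π₀ f₀

end Mixture

theorem stmt_6_general (f₀ f₁ : ℝ → ℝ) (hf₀m : Measurable f₀) (hf₁m : Measurable f₁)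
    (hf₀nn : ∀ y, 0 ≤ f₀ y) (hf₁nn : ∀ y, 0 ≤ f₁ y)
    (hf₀int : Integrable f₀) (hf₁int : Integrable f₁)
    (π₀ : ℝ) (hπ₀ : π₀ ∈ Set.Ioo (0:ℝ) 1) (π₁ : ℝ) (hπ₁ : π₁ = 1 - π₀)
    (μ : Measure (Bool × ℝ))
    (hμ : μ = ENNReal.ofReal π₀ •
        (Measure.dirac true).prod (volume.withDensity fun y => ENNReal.ofReal (f₀ y))
      + ENNReal.ofReal π₁ •
        (Measure.dirac false).prod (volume.withDensity fun y => ENNReal.ofReal (f₁ y)))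
    (r : ℝ → ℝ)
    (hr : ∀ y, r y = if 0 < π₀ * f₀ y + π₁ * f₁ y
      then π₀ * f₀ y / (π₀ * f₀ y + π₁ * f₁ y) else 0) :
    μ[Set.indicator {p : Bool × ℝ | p.1 = true} (fun _ => (1:ℝ)) |
        MeasurableSpace.comap Prod.snd inferInstance]
      =ᵐ[μ] fun p => r p.2 := by
  have hπ₁_nonneg : 0 ≤ π₁ := by linarith [hπ₀.2]
  obtain rfl : r = fun y => posteriorWeight (π₀ * f₀ y) (π₁ * f₁ y) := funext hr
  exact hμ ▸ condExp_indicator_fst_twoComponentMixture hπ₀.1.le hπ₁_nonneg hf₀m hf₁m hf₀nn hf₁nn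
    hf₀int hf₁int

/-- E-step posterior responsibilities: for the two-component mixture with latent label
`Z ~ Bernoulli(π₀)` and conditional densities `f₀`, `f₁`, the conditional expectation of
`1{Z = true}` given the second coordinate is `π₀f₀(Y)/(π₀f₀(Y)+π₁f₁(Y))`. -/
theorem stmt_6 (f₀ f₁ : ℝ → ℝ) (hf₀m : Measurable f₀) (hf₁m : Measurable f₁)
    (hf₀nn : ∀ y, 0 ≤ f₀ y) (hf₁nn : ∀ y, 0 ≤ f₁ y)
    (hf₀int : Integrable f₀) (hf₁int : Integrable f₁)
    (hf₀dens : ∫ y, f₀ y = 1) (hf₁dens : ∫ y, f₁ y = 1)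
    (π₀ : ℝ) (hπ₀ : π₀ ∈ Set.Ioo (0:ℝ) 1) (π₁ : ℝ) (hπ₁ : π₁ = 1 - π₀)
    (μ : Measure (Bool × ℝ))
    (hμ : μ = ENNReal.ofReal π₀ •
        (Measure.dirac true).prod (volume.withDensity fun y => ENNReal.ofReal (f₀ y))
      + ENNReal.ofReal π₁ •
        (Measure.dirac false).prod (volume.withDensity fun y => ENNReal.ofReal (f₁ y)))
    (r : ℝ → ℝ)
    (hr : ∀ y, r y = if 0 < π₀ * f₀ y + π₁ * f₁ y
      then π₀ * f₀ y / (π₀ * f₀ y + π₁ * f₁ y) else 0) :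
    μ[Set.indicator {p : Bool × ℝ | p.1 = true} (fun _ => (1:ℝ)) |
        MeasurableSpace.comap Prod.snd inferInstance]
      =ᵐ[μ] fun p => r p.2 :=
  stmt_6_general f₀ f₁ hf₀m hf₁m hf₀nn hf₁nn hf₀int hf₁int π₀ hπ₀ π₁ hπ₁ μ hμ r hr
end
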